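/- Let m ≥ 3 and ε ∈ 𝔽₂. The subgroup of the group of 𝔽₂-linear automorphisms of V = 𝔽₂^{2m} generated by the transvections t_{a+b}, where a and b range over all distinct vectors with θ₀(a) = θ₀(b) = ε, is exactly the full symplectic group {g : φ(g(u), g(v)) = φ(u,v) for all u, v ∈ V} ≅ Sp_{2m}(2). (This is the group L(D^ε) = L_∞(D^ε) of move sequences of the design D^ε, since the elementary move [θ_a, θ_b] is induced by t_{a+b}.) -/

import Mathlib

/-!
Each transvection `t_c`, `c ≠ 0`, is a generator: for `m ≥ 2` there is `a` with `θ₀(a) = ε` and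
`φ(a, c) = θ₀(c)`, and then `b = a + c` satisfies `θ₀(b) = θ₀(a) + θ₀(c) + φ(a, c) = ε`.
So it suffices that transvections generate the symplectic group. If `φ(x, y) = 1` then `t_{x+y}`
sends `x` to `y` and fixes every `z` with `φ(z, x) = φ(z, y)`; hence the transvections fixing
the first `k` standard hyperbolic pairs act transitively (in two steps) on the nonzero vectors
orthogonal to them, and then on the hyperbolic pairs orthogonal to them. A symplectic `g` fixing
the first `k` pairs is thus corrected by such a product to fix the first `k + 1`, and induction
on `k` ends at the identity.
-/
open Matrix

/-- Row vectors in `𝔽₂^{2m}`, with coordinates indexed by `Fin m ⊕ Fin m`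
(the first block and the second block of `m` coordinates). -/
abbrev Vm (m : ℕ) := (Fin m ⊕ Fin m) → ZMod 2

/-- The block matrix `e = (0 Iₘ; 0 0)`. -/
def eMat (m : ℕ) : Matrix (Fin m ⊕ Fin m) (Fin m ⊕ Fin m) (ZMod 2) :=
  Matrix.fromBlocks 0 1 0 0

/-- The block matrix `f = e + eᵀ = (0 Iₘ; Iₘ 0)`. -/
def fMat (m : ℕ) : Matrix (Fin m ⊕ Fin m) (Fin m ⊕ Fin m) (ZMod 2) :=
  eMat m + (eMat m)ᵀ

/-- The alternating bilinear form `φ(u,v) = u f vᵀ`. -/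
def phi (m : ℕ) (u v : Vm m) : ZMod 2 := u ⬝ᵥ (fMat m).mulVec v

/-- The quadratic form `θ₀(u) = u e uᵀ`. -/
def theta0 (m : ℕ) (u : Vm m) : ZMod 2 := u ⬝ᵥ (eMat m).mulVec u

/-- The quadratic form `θ_a(u) = θ₀(u) + φ(u,a)`. -/
def theta (m : ℕ) (a u : Vm m) : ZMod 2 := theta0 m u + phi m u a

/-- The transvection `t_c : u ↦ u + φ(u,c)·c`. -/
def tvec (m : ℕ) (c u : Vm m) : Vm m := u + phi m u c • c

variable {m : ℕ}

lemma zmod_two_eq_zero_or_one (x : ZMod 2) : x = 0 ∨ x = 1 := by revert x; decide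

lemma phi_eq_sum (u v : Vm m) : phi m u v =
    ∑ i, (u (.inl i) * v (.inr i) + u (.inr i) * v (.inl i)) := by
  simp [phi, fMat, eMat, dotProduct, mulVec, Fintype.sum_sum_type, fromBlocks, one_apply,
    mul_comm, Finset.sum_add_distrib]

lemma theta0_eq_sum (u : Vm m) : theta0 m u = ∑ i, u (.inl i) * u (.inr i) := by
  simp [theta0, eMat, dotProduct, mulVec, Fintype.sum_sum_type, fromBlocks, one_apply,
    mul_comm]

lemma phi_add_left (u v w : Vm m) : phi m (u + v) w = phi m u w + phi m v w := by
  simp [phi, add_dotProduct]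

lemma phi_add_right (u v w : Vm m) : phi m u (v + w) = phi m u v + phi m u w := by
  simp [phi, mulVec_add, dotProduct_add]

lemma phi_smul_left (r : ZMod 2) (u v : Vm m) : phi m (r • u) v = r * phi m u v := by
  simp [phi, smul_dotProduct]

lemma phi_smul_right (r : ZMod 2) (u v : Vm m) : phi m u (r • v) = r * phi m u v := by
  simp [phi, mulVec_smul]

lemma phi_comm (u v : Vm m) : phi m u v = phi m v u := by
  simp only [phi_eq_sum]
  exact Finset.sum_congr rfl fun i _ => by ring

lemma phi_self (u : Vm m) : phi m u u = 0 := by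
  rw [phi_eq_sum]
  exact Finset.sum_eq_zero fun i _ => by rw [mul_comm (u _), CharTwo.add_self_eq_zero]

lemma theta0_add (u v : Vm m) :
    theta0 m (u + v) = theta0 m u + theta0 m v + phi m u v := by
  simp only [theta0_eq_sum, phi_eq_sum, ← Finset.sum_add_distrib, Pi.add_apply]
  exact Finset.sum_congr rfl fun i _ => by ring

lemma phi_single (w : Vm m) (idx : Fin m ⊕ Fin m) : phi m w (Pi.single idx 1) = w idx.swap := by
  rcases idx with i | i <;> simp [phi_eq_sum, Pi.single_apply]

lemma theta0_single (idx : Fin m ⊕ Fin m) : theta0 m (Pi.single idx 1) = 0 := by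
  rcases idx with i | i <;> simp [theta0_eq_sum, Pi.single_apply]

lemma tvec_tvec (c u : Vm m) : tvec m c (tvec m c u) = u := by
  rw [tvec, tvec, phi_add_left, phi_smul_left, phi_self, mul_zero, add_zero, add_assoc,
    ← add_smul, CharTwo.add_self_eq_zero, zero_smul, add_zero]

lemma phi_tvec (c u v : Vm m) : phi m (tvec m c u) (tvec m c v) = phi m u v := by
  simp only [tvec, phi_add_left, phi_add_right, phi_smul_left, phi_smul_right, phi_self,
    phi_comm c]
  linear_combination (phi m u c * phi m v c) * CharTwo.two_eq_zero (R := ZMod 2)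

lemma isLinearMap_tvec (c : Vm m) : IsLinearMap (ZMod 2) (tvec m c) where
  map_add u v := by simp only [tvec, phi_add_left, add_smul]; abel
  map_smul r u := by rw [tvec, tvec, phi_smul_left, mul_smul, smul_add]

lemma tvec_of_phi_eq_zero {c u : Vm m} (h : phi m u c = 0) : tvec m c u = u := by
  rw [tvec, h, zero_smul, add_zero]

lemma tvec_add_of_phi_eq_one {u v : Vm m} (h : phi m u v = 1) : tvec m (u + v) u = v := by
  rw [tvec, phi_add_right, phi_self, h, zero_add, one_smul, ← add_assoc, ZModModule.add_self,
    zero_add]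

def tperm (m : ℕ) (c : Vm m) : Equiv.Perm (Vm m) :=
  ⟨tvec m c, tvec m c, tvec_tvec c, tvec_tvec c⟩

@[simp] lemma tperm_apply (c u : Vm m) : tperm m c u = tvec m c u := rfl

lemma tperm_zero : tperm m 0 = 1 := Equiv.ext fun u => by simp [tvec]

def Sp (m : ℕ) : Subgroup (Equiv.Perm (Vm m)) where
  carrier := {g | IsLinearMap (ZMod 2) (fun u : Vm m => g u) ∧
      ∀ u v : Vm m, phi m (g u) (g v) = phi m u v}
  one_mem' := ⟨⟨fun _ _ => rfl, fun _ _ => rfl⟩, fun _ _ => rfl⟩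
  mul_mem' := by
    rintro a b ⟨ha, ha'⟩ ⟨hb, hb'⟩
    refine ⟨⟨fun u v => ?_, fun r u => ?_⟩, fun u v => ?_⟩ <;>
      simp only [Equiv.Perm.mul_apply, ha.map_add, hb.map_add, ha.map_smul, hb.map_smul, ha', hb']
  inv_mem' := by
    rintro g ⟨hg, hg'⟩
    refine ⟨⟨fun u v => g.injective ?_, fun r u => g.injective ?_⟩, fun u v => ?_⟩
    · simp [hg.map_add]
    · simp [hg.map_smul]
    · rw [← hg']; simp

lemma tperm_mem_Sp (c : Vm m) : tperm m c ∈ Sp m :=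
  ⟨isLinearMap_tvec c, phi_tvec c⟩

def transvGroup (m : ℕ) (ε : ZMod 2) : Subgroup (Equiv.Perm (Vm m)) :=
  Subgroup.closure {g | ∃ a b : Vm m, a ≠ b ∧ theta0 m a = ε ∧ theta0 m b = ε ∧
      ∀ u : Vm m, g u = tvec m (a + b) u}

lemma transvGroup_le_Sp (ε : ZMod 2) : transvGroup m ε ≤ Sp m := by
  refine (Subgroup.closure_le _).2 ?_
  rintro g ⟨a, b, -, -, -, hg⟩
  rw [show g = tperm m (a + b) from Equiv.ext hg]
  exact tperm_mem_Sp _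

-- The coordinates `inl i` and `inr i` span the `i`-th hyperbolic plane of `φ`.
def pairIndex : Fin m ⊕ Fin m → Fin m := Sum.elim id id

lemma pairIndex_swap (idx : Fin m ⊕ Fin m) : pairIndex idx.swap = pairIndex idx := by
  cases idx <;> rfl

lemma exists_theta0_eq_phi_eq (hm : 2 ≤ m) {c : Vm m} (hc : c ≠ 0) (ε δ : ZMod 2) :
    ∃ a, theta0 m a = ε ∧ phi m a c = δ := by
  obtain ⟨idx, hidx⟩ := Function.ne_iff.1 hc
  have hc1 : c idx = 1 := (zmod_two_eq_zero_or_one _).resolve_left hidx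
  obtain ⟨k, hk⟩ :=
    Fintype.exists_ne_of_one_lt_card (by rw [Fintype.card_fin]; exact hm) (pairIndex idx)
  obtain ⟨a₀, ha₀, ha₀idx⟩ : ∃ a₀ : Vm m, theta0 m a₀ = ε ∧ a₀ idx = 0 := by
    rcases zmod_two_eq_zero_or_one ε with rfl | rfl
    · exact ⟨0, by simp [theta0], rfl⟩
    · refine ⟨Pi.single (.inl k) 1 + Pi.single (.inr k) 1, ?_, ?_⟩
      · simp [theta0_add, theta0_single, phi_single]
      · rcases idx with i | i <;> simp_all [pairIndex]
  set d : Vm m := Pi.single idx.swap 1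
  have hdc : phi m d c = 1 := by rw [phi_comm, phi_single, Sum.swap_swap, hc1]
  by_cases h : phi m a₀ c = δ
  · exact ⟨a₀, ha₀, h⟩
  refine ⟨a₀ + d, ?_, ?_⟩
  · rw [theta0_add, ha₀, theta0_single, phi_single, Sum.swap_swap, ha₀idx, add_zero, add_zero]
  · rw [phi_add_left, hdc]
    revert h; generalize phi m a₀ c = x; revert x δ; decide

lemma tperm_mem_transvGroup (hm : 2 ≤ m) (ε : ZMod 2) (c : Vm m) : tperm m c ∈ transvGroup m ε := by
  rcases eq_or_ne c 0 with rfl | hc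
  · rw [tperm_zero]; exact one_mem _
  obtain ⟨a, ha, hac⟩ := exists_theta0_eq_phi_eq hm hc ε (theta0 m c)
  refine Subgroup.subset_closure ⟨a, a + c, fun h => hc ?_, ha, ?_, fun u => ?_⟩
  · simpa using h.symm
  · rw [theta0_add, ha, hac, add_assoc, ZModModule.add_self, add_zero]
  · rw [← add_assoc, ZModModule.add_self, zero_add, tperm_apply]

lemma Equiv.Perm.apply_eq_of_mem_fixingSubgroup {α : Type*} {S : Set α} {g : Equiv.Perm α}
    (hg : g ∈ fixingSubgroup (Equiv.Perm α) S) {z : α} (hz : z ∈ S) : g z = z :=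
  hg ⟨z, hz⟩

lemma exists_mem_fixingSubgroup_apply_eq (hm : 2 ≤ m) (ε : ZMod 2) {S : Set (Vm m)} {x y : Vm m}
    (hxy : phi m x y = 1) (hS : ∀ z ∈ S, phi m z x = phi m z y) :
    ∃ τ ∈ transvGroup m ε ⊓ fixingSubgroup (Equiv.Perm (Vm m)) S, τ x = y := by
  refine ⟨tperm m (x + y), ⟨tperm_mem_transvGroup hm ε _, fun z => ?_⟩, tvec_add_of_phi_eq_one hxy⟩
  exact tvec_of_phi_eq_zero (by rw [phi_add_right, hS z z.2, ZModModule.add_self])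

lemma exists_mem_fixingSubgroup_apply_eq_of_two_steps (hm : 2 ≤ m) (ε : ZMod 2)
    {S : Set (Vm m)} {x w y : Vm m} (hxw : phi m x w = 1) (hwy : phi m w y = 1)
    (hSx : ∀ z ∈ S, phi m z x = phi m z w) (hSy : ∀ z ∈ S, phi m z w = phi m z y) :
    ∃ τ ∈ transvGroup m ε ⊓ fixingSubgroup (Equiv.Perm (Vm m)) S, τ x = y := by
  obtain ⟨σ, hσ, hσx⟩ := exists_mem_fixingSubgroup_apply_eq hm ε hxw hSx
  obtain ⟨τ, hτ, hτw⟩ := exists_mem_fixingSubgroup_apply_eq hm ε hwy hSy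
  exact ⟨τ * σ, mul_mem hτ hσ, by rw [Equiv.Perm.mul_apply, hσx, hτw]⟩

def IsPerp (S : Set (Vm m)) (x : Vm m) : Prop := ∀ z ∈ S, phi m z x = 0

lemma IsPerp.add {S : Set (Vm m)} {x y : Vm m} (hx : IsPerp S x) (hy : IsPerp S y) :
    IsPerp S (x + y) := fun z hz => by rw [phi_add_right, hx z hz, hy z hz, add_zero]

lemma IsPerp.map {S : Set (Vm m)} {x : Vm m} {g : Equiv.Perm (Vm m)} (hx : IsPerp S x)
    (hg : g ∈ Sp m) (hgS : g ∈ fixingSubgroup (Equiv.Perm (Vm m)) S) : IsPerp S (g x) :=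
  fun z hz => by rw [← g.apply_eq_of_mem_fixingSubgroup hgS hz, hg.2, hx z hz]

def basisBelow (m k : ℕ) : Set (Vm m) :=
  {x | ∃ idx, (pairIndex idx : ℕ) < k ∧ x = Pi.single idx 1}

lemma isPerp_single {k : ℕ} {idx : Fin m ⊕ Fin m} (h : k ≤ pairIndex idx) :
    IsPerp (basisBelow m k) (Pi.single idx 1) := by
  rintro _ ⟨j, hj, rfl⟩
  have : idx.swap ≠ j := by rintro rfl; rw [pairIndex_swap] at hj; omega
  simp [phi_single, this]

lemma exists_isPerp_phi_eq_one {k : ℕ} {x : Vm m} (hx0 : x ≠ 0) (hx : IsPerp (basisBelow m k) x) :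
    ∃ w, IsPerp (basisBelow m k) w ∧ phi m x w = 1 := by
  obtain ⟨idx, hidx⟩ := Function.ne_iff.1 hx0
  have hx1 : x idx = 1 := (zmod_two_eq_zero_or_one _).resolve_left hidx
  refine ⟨Pi.single idx.swap 1,
    isPerp_single (not_lt.1 fun hlt => one_ne_zero (α := ZMod 2) ?_), ?_⟩
  · rw [← hx1, ← hx (Pi.single idx.swap 1) ⟨idx.swap, hlt, rfl⟩, phi_comm, phi_single,
      Sum.swap_swap]
  · rw [phi_single, Sum.swap_swap, hx1]

lemma exists_isPerp_phi_eq_one_phi_eq_one {k : ℕ} {x y : Vm m} (hx0 : x ≠ 0) (hy0 : y ≠ 0)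
    (hx : IsPerp (basisBelow m k) x) (hy : IsPerp (basisBelow m k) y) :
    ∃ w, IsPerp (basisBelow m k) w ∧ phi m x w = 1 ∧ phi m w y = 1 := by
  obtain ⟨w₁, hw₁, hxw₁⟩ := exists_isPerp_phi_eq_one hx0 hx
  obtain ⟨w₂, hw₂, hyw₂⟩ := exists_isPerp_phi_eq_one hy0 hy
  rw [phi_comm] at hyw₂
  rcases zmod_two_eq_zero_or_one (phi m w₁ y) with h₁ | h₁
  · rcases zmod_two_eq_zero_or_one (phi m x w₂) with h₂ | h₂
    · exact ⟨w₁ + w₂, hw₁.add hw₂, by rw [phi_add_right, hxw₁, h₂, add_zero],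
        by rw [phi_add_left, h₁, hyw₂, zero_add]⟩
    · exact ⟨w₂, hw₂, h₂, hyw₂⟩
  · exact ⟨w₁, hw₁, hxw₁, h₁⟩

lemma exists_mem_fixingSubgroup_apply_eq_of_isPerp (hm : 2 ≤ m) (ε : ZMod 2) {k : ℕ} {x y : Vm m}
    (hx0 : x ≠ 0) (hy0 : y ≠ 0) (hx : IsPerp (basisBelow m k) x) (hy : IsPerp (basisBelow m k) y) :
    ∃ τ ∈ transvGroup m ε ⊓ fixingSubgroup (Equiv.Perm (Vm m)) (basisBelow m k), τ x = y := by
  obtain ⟨w, hw, hxw, hwy⟩ := exists_isPerp_phi_eq_one_phi_eq_one hx0 hy0 hx hy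
  exact exists_mem_fixingSubgroup_apply_eq_of_two_steps hm ε hxw hwy
    (fun z hz => (hx z hz).trans (hw z hz).symm) (fun z hz => (hw z hz).trans (hy z hz).symm)

lemma exists_mem_fixingSubgroup_insert_apply_eq (hm : 2 ≤ m) (ε : ZMod 2) {S : Set (Vm m)}
    {e f v : Vm m} (hef : phi m e f = 1) (hev : phi m e v = 1)
    (he : IsPerp S e) (hf : IsPerp S f) (hv : IsPerp S v) :
    ∃ τ ∈ transvGroup m ε ⊓ fixingSubgroup (Equiv.Perm (Vm m)) (insert e S), τ v = f := by
  rcases zmod_two_eq_zero_or_one (phi m v f) with hvf | hvf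
  · refine exists_mem_fixingSubgroup_apply_eq_of_two_steps hm ε (w := e + f) ?_ ?_ ?_ ?_
    · rw [phi_add_right, phi_comm, hev, hvf, add_zero]
    · rw [phi_add_left, hef, phi_self, add_zero]
    · rintro z (rfl | hz)
      · rw [phi_add_right, phi_self, hev, hef, zero_add]
      · rw [hv z hz, (he.add hf) z hz]
    · rintro z (rfl | hz)
      · rw [phi_add_right, phi_self, hef, zero_add]
      · rw [(he.add hf) z hz, hf z hz]
  · refine exists_mem_fixingSubgroup_apply_eq hm ε hvf ?_
    rintro z (rfl | hz)
    · rw [hev, hef]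
    · rw [hv z hz, hf z hz]

lemma exists_mem_fixingSubgroup_apply_pair (hm : 2 ≤ m) (ε : ZMod 2) {k : ℕ} (hk : k < m)
    {u v : Vm m} (hu : IsPerp (basisBelow m k) u) (hv : IsPerp (basisBelow m k) v)
    (huv : phi m u v = 1) :
    ∃ τ ∈ transvGroup m ε ⊓ fixingSubgroup (Equiv.Perm (Vm m)) (basisBelow m k),
      τ u = Pi.single (.inl ⟨k, hk⟩) 1 ∧ τ v = Pi.single (.inr ⟨k, hk⟩) 1 := by
  set e : Vm m := Pi.single (.inl ⟨k, hk⟩) 1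
  set f : Vm m := Pi.single (.inr ⟨k, hk⟩) 1
  have he : IsPerp (basisBelow m k) e := isPerp_single le_rfl
  have hf : IsPerp (basisBelow m k) f := isPerp_single le_rfl
  have hef : phi m e f = 1 := by simp [e, f, phi_single]
  have hu0 : u ≠ 0 := by rintro rfl; simp [phi] at huv
  have he0 : e ≠ 0 := by rintro h; simp [h, phi] at hef
  obtain ⟨σ, hσ, hσu⟩ := exists_mem_fixingSubgroup_apply_eq_of_isPerp hm ε hu0 he0 hu he
  have hσSp : σ ∈ Sp m := transvGroup_le_Sp ε hσ.1
  have hev : phi m e (σ v) = 1 := by rw [← hσu, hσSp.2, huv]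
  obtain ⟨τ, hτ, hτv⟩ :=
    exists_mem_fixingSubgroup_insert_apply_eq hm ε hef hev he hf (hv.map hσSp hσ.2)
  rw [Subgroup.mem_inf, SubMulAction.mem_fixingSubgroup_insert_iff] at hτ
  refine ⟨τ * σ, mul_mem ⟨hτ.1, hτ.2.2⟩ hσ, ?_, hτv⟩
  rw [Equiv.Perm.mul_apply, hσu, ← Equiv.Perm.smul_def, hτ.2.1]

lemma basisBelow_succ {k : ℕ} (hk : k < m) : basisBelow m (k + 1) =
    insert (Pi.single (.inl ⟨k, hk⟩) 1) (insert (Pi.single (.inr ⟨k, hk⟩) 1) (basisBelow m k)) := by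
  ext x
  simp only [basisBelow, Set.mem_insert_iff, Set.mem_ofPred_eq]
  constructor
  · rintro ⟨idx, hidx, rfl⟩
    rcases Nat.lt_succ_iff_lt_or_eq.1 hidx with hlt | heq
    · exact .inr (.inr ⟨idx, hlt, rfl⟩)
    · rcases idx with i | i
      · exact .inl (by rw [show i = ⟨k, hk⟩ from Fin.ext heq])
      · exact .inr (.inl (by rw [show i = ⟨k, hk⟩ from Fin.ext heq]))
  · rintro (rfl | rfl | ⟨idx, hidx, rfl⟩)
    · exact ⟨.inl ⟨k, hk⟩, Nat.lt_succ_self k, rfl⟩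
    · exact ⟨.inr ⟨k, hk⟩, Nat.lt_succ_self k, rfl⟩
    · exact ⟨idx, Nat.lt_succ_of_lt hidx, rfl⟩

lemma eq_one_of_mem_fixingSubgroup_basisBelow {g : Equiv.Perm (Vm m)} (hg : g ∈ Sp m)
    (hfix : g ∈ fixingSubgroup (Equiv.Perm (Vm m)) (basisBelow m m)) : g = 1 := by
  have : IsLinearMap.mk' _ hg.1 = LinearMap.id := (Pi.basisFun (ZMod 2) _).ext fun idx => by
    simpa using g.apply_eq_of_mem_fixingSubgroup hfix ⟨idx, (pairIndex idx).isLt, rfl⟩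
  exact Equiv.ext fun u => LinearMap.congr_fun this u

lemma mem_transvGroup_of_mem_fixingSubgroup (hm : 2 ≤ m) (ε : ZMod 2) {k : ℕ} (hk : k ≤ m)
    {g : Equiv.Perm (Vm m)} (hg : g ∈ Sp m)
    (hfix : g ∈ fixingSubgroup (Equiv.Perm (Vm m)) (basisBelow m k)) : g ∈ transvGroup m ε := by
  induction hk using Nat.decreasingInduction generalizing g with
  | self => rw [eq_one_of_mem_fixingSubgroup_basisBelow hg hfix]; exact one_mem _
  | of_succ k hk ih =>
    have hperp (idx : Fin m ⊕ Fin m) (h : pairIndex idx = ⟨k, hk⟩) :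
        IsPerp (basisBelow m k) (g (Pi.single idx 1)) :=
      (isPerp_single (by rw [h])).map hg hfix
    obtain ⟨τ, hτ, hτe, hτf⟩ := exists_mem_fixingSubgroup_apply_pair hm ε hk
      (hperp (.inl ⟨k, hk⟩) rfl) (hperp (.inr ⟨k, hk⟩) rfl) (by simp [hg.2, phi_single])
    rw [Subgroup.mem_inf] at hτ
    have hτg : τ * g ∈ transvGroup m ε := by
      refine ih (mul_mem (transvGroup_le_Sp ε hτ.1) hg) ?_
      simp only [basisBelow_succ hk, SubMulAction.mem_fixingSubgroup_insert_iff,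
        Equiv.Perm.smul_def, Equiv.Perm.mul_apply, hτe, hτf, true_and]
      exact mul_mem hτ.2 hfix
    simpa using mul_mem (inv_mem hτ.1) hτg

theorem stmt_9 (m : ℕ) (hm : 3 ≤ m) (ε : ZMod 2) :
    (Subgroup.closure {g : Equiv.Perm (Vm m) |
        ∃ a b : Vm m, a ≠ b ∧ theta0 m a = ε ∧ theta0 m b = ε ∧
          ∀ u : Vm m, g u = tvec m (a + b) u} : Set (Equiv.Perm (Vm m))) =
      {g : Equiv.Perm (Vm m) |
        IsLinearMap (ZMod 2) (fun u : Vm m => g u) ∧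
        ∀ u v : Vm m, phi m (g u) (g v) = phi m u v} := by
  have hSp : Sp m ≤ transvGroup m ε := fun g hg =>
    mem_transvGroup_of_mem_fixingSubgroup (by omega) ε (Nat.zero_le m) hg
      fun ⟨_, _, hidx, _⟩ => absurd hidx (Nat.not_lt_zero _)
  exact congrArg SetLike.coe (le_antisymm (transvGroup_le_Sp ε) hSp)
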